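/- Let D be a directed graph, let P be a directed path in D, and let Q be a directed a–b path in D for vertices a, b of D. Then there exists a directed a–b path Q' in D with Q' ⊆ P ∪ Q such that P and Q' are laced. -/

import Mathlib

/-!
Common definitions: directed graphs as vertex/edge sets, directed paths and
walks, rays, arborescences, tree-like models and butterfly minors, laced
paths, knit rays, and the shapes (dominated directed rays, stars, combs,
chains of triangles) from the paper.
-/

universe u

/-- A directed graph on an ambient vertex type `V`, given by a set of vertices
and a set of directed edges (ordered pairs of vertices). -/
structure DGraph (V : Type u) where
  verts : Set V
  edges : Set (V × V)

namespace DGraph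

variable {V : Type u}

instance : Union (DGraph V) := ⟨fun G H => ⟨G.verts ∪ H.verts, G.edges ∪ H.edges⟩⟩
instance : Inter (DGraph V) := ⟨fun G H => ⟨G.verts ∩ H.verts, G.edges ∩ H.edges⟩⟩
instance : HasSubset (DGraph V) := ⟨fun H G => H.verts ⊆ G.verts ∧ H.edges ⊆ G.edges⟩
instance : EmptyCollection (DGraph V) := ⟨⟨∅, ∅⟩⟩

/-- The union of a family of directed graphs. -/
def iUnion {ι : Type} (f : ι → DGraph V) : DGraph V :=
  ⟨⋃ i, (f i).verts, ⋃ i, (f i).edges⟩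

/-- The directed graph obtained by reversing the orientation of every edge. -/
def reverse (G : DGraph V) : DGraph V := ⟨G.verts, {e | (e.2, e.1) ∈ G.edges}⟩

/-- The directed graph consisting of a single vertex and no edges. -/
def single (v : V) : DGraph V := ⟨{v}, ∅⟩

/-- Two vertices joined by both directed edges. -/
def linkBoth (a b : V) : DGraph V := ⟨{a, b}, {(a, b), (b, a)}⟩

/-- A directed triangle (directed cycle of length 3) on `a, b, c`. -/
def triangle (a b c : V) : DGraph V := ⟨{a, b, c}, {(a, b), (b, c), (c, a)}⟩

/-- The directed graph of a list of vertices with its consecutive edges. -/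
def ofList (l : List V) : DGraph V := ⟨{v | v ∈ l}, {e | e ∈ l.zip l.tail}⟩

/-- `𝒟(P)` for the (undirected) path `P` given by the list `l`:
the double path on `l`. -/
def doubleOfList (l : List V) : DGraph V := ofList l ∪ (ofList l).reverse

/-- The directed cycle through the vertices of `l` in order. -/
def cycleOfList (l : List V) : DGraph V :=
  ⟨{v | v ∈ l}, {e | e ∈ l.zip (l.tail ++ l.take 1)}⟩

/-- `G` is a directed cycle. -/
def IsDirectedCycle (G : DGraph V) : Prop :=
  ∃ l : List V, l.Nodup ∧ 2 ≤ l.length ∧ G = cycleOfList l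

/-- The out-oriented ray with vertices `f 0, f 1, …`, rooted at `f 0`. -/
def outRay (f : ℕ → V) : DGraph V :=
  ⟨Set.range f, {e | ∃ n, e = (f n, f (n + 1))}⟩

/-- The in-oriented ray with vertices `f 0, f 1, …`, rooted at `f 0`. -/
def inRay (f : ℕ → V) : DGraph V :=
  ⟨Set.range f, {e | ∃ n, e = (f (n + 1), f n)}⟩

/-- `𝒟(R)` for the undirected ray `R` with vertices `f 0, f 1, …`. -/
def doubleRay (f : ℕ → V) : DGraph V := outRay f ∪ inRay f

/-- The dominated directed ray on an out-oriented ray: the out-oriented ray `f`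
rooted at `f 0` together with the edges `(f (n+1), f 0)`. -/
def domOutRay (f : ℕ → V) : DGraph V :=
  ⟨Set.range f, {e | ∃ n, e = (f n, f (n + 1))} ∪ {e | ∃ n, e = (f (n + 1), f 0)}⟩

/-- The dominated directed ray on an in-oriented ray: the in-oriented ray `f`
rooted at `f 0` together with the edges `(f 0, f (n+1))`. -/
def domInRay (f : ℕ → V) : DGraph V :=
  ⟨Set.range f, {e | ∃ n, e = (f (n + 1), f n)} ∪ {e | ∃ n, e = (f 0, f (n + 1))}⟩

/-- `G` is a dominated directed ray. -/
def IsDominatedDirectedRay (G : DGraph V) : Prop :=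
  ∃ f : ℕ → V, Function.Injective f ∧ (G = domOutRay f ∨ G = domInRay f)

/-- The internal vertices of a path or walk given as a list. -/
def internals (l : List V) : List V := l.tail.dropLast

/-- `l` is a directed path in `G`. -/
def IsPath (G : DGraph V) (l : List V) : Prop :=
  l ≠ [] ∧ l.Nodup ∧ (∀ v ∈ l, v ∈ G.verts) ∧ ∀ e ∈ l.zip l.tail, e ∈ G.edges

/-- `l` is a directed path in `G` with startvertex `a` and endvertex `b`. -/
def IsPathFrom (G : DGraph V) (a b : V) (l : List V) : Prop :=
  IsPath G l ∧ l.head? = some a ∧ l.getLast? = some b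

/-- There is a directed `a`–`b` path in `G`. -/
def Reaches (G : DGraph V) (a b : V) : Prop := ∃ l, IsPathFrom G a b l

/-- `G` is strongly connected. -/
def StronglyConnected (G : DGraph V) : Prop :=
  ∀ a ∈ G.verts, ∀ b ∈ G.verts, Reaches G a b

/-- `l` is a directed `X`–`Y` path in `G`: it starts in `X`, ends in `Y` and
has no internal vertex in `X ∪ Y`. -/
def IsXYPath (G : DGraph V) (X Y : Set V) (l : List V) : Prop :=
  IsPath G l ∧ (∃ a ∈ X, l.head? = some a) ∧ (∃ b ∈ Y, l.getLast? = some b) ∧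
    ∀ v ∈ internals l, v ∉ X ∪ Y

/-- `T` is an in-arborescence rooted at `r`: its underlying graph is a tree
and all edges are directed towards the root `r`. -/
def IsInArborescence (T : DGraph V) (r : V) : Prop :=
  r ∈ T.verts ∧ (∀ e ∈ T.edges, e.1 ∈ T.verts ∧ e.2 ∈ T.verts) ∧
  (∀ w, (r, w) ∉ T.edges) ∧ (∀ v ∈ T.verts, v ≠ r → ∃! w, (v, w) ∈ T.edges) ∧
  (∀ v ∈ T.verts, Reaches T v r)

/-- `T` is an out-arborescence rooted at `r`. -/
def IsOutArborescence (T : DGraph V) (r : V) : Prop := IsInArborescence T.reverse r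

/-- `v` is a leaf of the in-arborescence `T` rooted at `r`. -/
def IsLeafOfInArb (T : DGraph V) (r v : V) : Prop :=
  v ∈ T.verts ∧ v ≠ r ∧ ∀ u, (u, v) ∉ T.edges

/-- `v` is a leaf of the out-arborescence `T` rooted at `r`. -/
def IsLeafOfOutArb (T : DGraph V) (r v : V) : Prop := IsLeafOfInArb T.reverse r v

/-- A tree-like model of `H` in `D`; every vertex of `H` is identified with the
common root of the in- and out-arborescence of its branch set. -/
structure TreeLikeModel (D H : DGraph V) where
  bag : V → DGraph V
  tin : V → DGraph V
  tout : V → DGraph V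
  emap : V × V → V × V
  bag_sub : ∀ v ∈ H.verts, bag v ⊆ D
  bag_disjoint : ∀ v ∈ H.verts, ∀ w ∈ H.verts, v ≠ w → (bag v).verts ∩ (bag w).verts = ∅
  bag_eq : ∀ v ∈ H.verts, bag v = tin v ∪ tout v
  tin_arb : ∀ v ∈ H.verts, IsInArborescence (tin v) v
  tout_arb : ∀ v ∈ H.verts, IsOutArborescence (tout v) v
  roots_eq : ∀ v ∈ H.verts, (tin v).verts ∩ (tout v).verts = {v}
  emap_mem : ∀ e ∈ H.edges, emap e ∈ D.edges
  emap_tail : ∀ e ∈ H.edges, (emap e).1 ∈ (tout e.1).verts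
  emap_head : ∀ e ∈ H.edges, (emap e).2 ∈ (tin e.2).verts

/-- `H` is a butterfly minor of `D`. -/
def IsButterflyMinor (D H : DGraph V) : Prop := Nonempty (TreeLikeModel D H)

/-- `G` is a double path (`𝒟(P)` for an undirected path `P`) with endpoints
`a` and `b`. -/
def IsDoublePath (G : DGraph V) (a b : V) : Prop :=
  ∃ l : List V, l.Nodup ∧ l.head? = some a ∧ l.getLast? = some b ∧ G = doubleOfList l

/-- `G = 𝒟(S)` for a subdivided star `S` with infinitely many leaves, with
centre `c` and branches `q n`; `teeth` is the set of leaves of `S`. -/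
def IsDSubdividedStar (G : DGraph V) (teeth : Set V) : Prop :=
  ∃ (c : V) (q : ℕ → List V),
    (∀ n, (q n).Nodup ∧ (q n).head? = some c ∧ 2 ≤ (q n).length) ∧
    (∀ m n, m ≠ n → ∀ v, v ∈ q m → v ∈ q n → v = c) ∧
    G = iUnion (fun n => doubleOfList (q n)) ∧
    teeth = {v | ∃ n, (q n).getLast? = some v}

/-- `G` is obtained from `𝒟(S)` for a subdivided star `S` by replacing the
centre of infinite degree by a dominated directed ray. -/
def IsRayCentreStar (G : DGraph V) (teeth : Set V) : Prop :=
  ∃ (f : ℕ → V) (R : DGraph V) (g : ℕ → V) (q : ℕ → List V),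
    Function.Injective f ∧ (R = domOutRay f ∨ R = domInRay f) ∧
    (∀ n, (q n).Nodup ∧ (q n).head? = some (g n)) ∧
    (∀ n, ∀ v ∈ q n, v ∉ Set.range f) ∧
    (∀ m n, m ≠ n → ∀ v ∈ q m, v ∉ q n) ∧
    G = R ∪ iUnion (fun n => doubleOfList (q n) ∪ linkBoth (f n) (g n)) ∧
    teeth = {v | ∃ n, (q n).getLast? = some v}

/-- `G` is shaped by a star, with set of teeth `teeth`. -/
def IsShapedByStar (G : DGraph V) (teeth : Set V) : Prop :=
  (IsDominatedDirectedRay G ∧ teeth = G.verts) ∨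
  IsDSubdividedStar G teeth ∨ IsRayCentreStar G teeth

/-- `G = 𝒟(C)` for a comb `C` with spine `f`, branches `q n` attached at
`f (α n)`; `teeth` is the set of teeth of `C`. -/
def IsDComb (G : DGraph V) (teeth : Set V) : Prop :=
  ∃ (f : ℕ → V) (α : ℕ → ℕ) (q : ℕ → List V),
    Function.Injective f ∧ Function.Injective α ∧
    (∀ n, (q n).Nodup ∧ (q n).head? = some (f (α n))) ∧
    (∀ n, ∀ v ∈ (q n).tail, v ∉ Set.range f) ∧
    (∀ m n, m ≠ n → ∀ v ∈ q m, v ∉ q n) ∧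
    G = doubleRay f ∪ iUnion (fun n => doubleOfList (q n)) ∧
    teeth = {v | ∃ n, (q n).getLast? = some v}

/-- The double path on `l` together with both edges between `b` and the first
vertex of `l` (empty if `l` is empty). -/
def branchGraph (b : V) (l : List V) : DGraph V :=
  match l with
  | [] => ∅
  | h :: _ => doubleOfList l ∪ linkBoth b h

/-- `G` is obtained from `𝒟(C)` for a comb `C` by replacing each junction of
`C` by a directed cycle of length 3 as described in the paper.  Position `k`
of the spine is replaced by the piece `S k` (a single vertex, or a directed
triangle at junctions), with `L k`, `R k`, `B k` the vertices of `S k` to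
which the left spine part, the right spine part and the branch attach, and
`t n` the tooth of branch `n`. -/
def IsTriangleComb (G : DGraph V) (teeth : Set V) : Prop :=
  ∃ (α : ℕ → ℕ) (q : ℕ → List V) (S : ℕ → DGraph V) (L R B : ℕ → V) (t : ℕ → V),
    Function.Injective α ∧
    (∀ j k, j ≠ k → (S j).verts ∩ (S k).verts = ∅) ∧
    (∀ n, (q n).Nodup) ∧
    (∀ m n, m ≠ n → ∀ v ∈ q m, v ∉ q n) ∧
    (∀ n, ∀ v ∈ q n, ∀ k, v ∉ (S k).verts) ∧
    (∀ k, L k ∈ (S k).verts ∧ R k ∈ (S k).verts ∧ B k ∈ (S k).verts) ∧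
    (∀ k, (¬ ∃ n, α n = k ∧ 1 ≤ k) → ∃ v, S k = single v) ∧
    (∀ n, 1 ≤ α n → ∃ a b c, a ≠ b ∧ b ≠ c ∧ a ≠ c ∧ S (α n) = triangle a b c) ∧
    (∀ n, 1 ≤ α n → q n ≠ [] →
      L (α n) ≠ R (α n) ∧ L (α n) ≠ B (α n) ∧ R (α n) ≠ B (α n)) ∧
    (∀ n, 1 ≤ α n → q n = [] →
      t n ∈ (S (α n)).verts ∧ L (α n) ≠ R (α n) ∧ t n ≠ L (α n) ∧ t n ≠ R (α n)) ∧
    (∀ n, q n ≠ [] → (q n).getLast? = some (t n)) ∧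
    (∀ n, α n = 0 → q n = [] → t n ∈ (S 0).verts) ∧
    G = iUnion S ∪ iUnion (fun k => linkBoth (R k) (L (k + 1))) ∪
        iUnion (fun n => branchGraph (B (α n)) (q n)) ∧
    teeth = Set.range t

/-- `G` is shaped by a comb, with set of teeth `teeth`. -/
def IsShapedByComb (G : DGraph V) (teeth : Set V) : Prop :=
  IsDComb G teeth ∨ IsTriangleComb G teeth

/-- The core of a chain of triangles: triangles `a i, b i, c i` together with
the edges `(a (i+1), a i)` and `(c i, c (i+1))`. -/
def chainCore (a b c : ℕ → V) : DGraph V :=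
  ⟨Set.range a ∪ Set.range b ∪ Set.range c,
   {e | ∃ i, e = (a i, b i) ∨ e = (b i, c i) ∨ e = (c i, a i) ∨
        e = (a (i + 1), a i) ∨ e = (c i, c (i + 1))}⟩

/-- `G` is a chain of triangles with set of teeth `teeth`. -/
def IsChainOfTriangles (G : DGraph V) (teeth : Set V) : Prop :=
  ∃ (a b c : ℕ → V) (q : ℕ → List V),
    (Function.Injective fun p : ℕ × Fin 3 => ![a, b, c] p.2 p.1) ∧
    (∀ i, (q i).Nodup ∧ (q i).head? = some (b i)) ∧
    (∀ i, ∀ v ∈ (q i).tail, ∀ j, v ≠ a j ∧ v ≠ b j ∧ v ≠ c j) ∧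
    (∀ i j, i ≠ j → ∀ v ∈ q i, v ∉ q j) ∧
    G = chainCore a b c ∪ iUnion (fun i => doubleOfList (q i)) ∧
    teeth = {v | ∃ i, (q i).getLast? = some v}

/-- `G` is a subdivided in-star with centre (root) `c` and all edges directed
towards `c`; it has infinitely many leaves and `teeth` is its set of leaves. -/
def IsSubdividedInStar (G : DGraph V) (teeth : Set V) : Prop :=
  ∃ (c : V) (q : ℕ → List V),
    (∀ n, (q n).Nodup ∧ (q n).getLast? = some c ∧ 2 ≤ (q n).length) ∧
    (∀ m n, m ≠ n → ∀ v, v ∈ q m → v ∈ q n → v = c) ∧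
    G = iUnion (fun n => ofList (q n)) ∧
    teeth = {v | ∃ n, (q n).head? = some v}

/-- `G` is a subdivided out-star. -/
def IsSubdividedOutStar (G : DGraph V) (teeth : Set V) : Prop :=
  IsSubdividedInStar G.reverse teeth

/-- `G = 𝒟(K_{1,∞})`. -/
def IsDInfiniteStar (G : DGraph V) : Prop :=
  ∃ (c : V) (g : ℕ → V), Function.Injective g ∧ (∀ n, g n ≠ c) ∧
    G = ⟨insert c (Set.range g), {e | ∃ n, e = (c, g n) ∨ e = (g n, c)}⟩

/-- `G = 𝒟(R)` for an undirected ray `R`. -/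
def IsDoubleRayGraph (G : DGraph V) : Prop :=
  ∃ f : ℕ → V, Function.Injective f ∧ G = doubleRay f

/-- `G` is a subdivision of a dominated directed ray (parallel edges being
collapsed): the ray `f`, its original vertices sitting at the positions
`α n ≥ 1`, and for each `n` a subdivided dominating edge `p n`. -/
def IsSubdivDominatedRay (G : DGraph V) : Prop :=
  (∃ (f : ℕ → V) (α : ℕ → ℕ) (p : ℕ → List V),
    Function.Injective f ∧ StrictMono α ∧ (∀ n, 1 ≤ α n) ∧
    (∀ n, (p n).Nodup ∧ (p n).head? = some (f (α n)) ∧ (p n).getLast? = some (f 0) ∧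
      2 ≤ (p n).length) ∧
    (∀ n, ∀ v ∈ internals (p n), v ∉ Set.range f) ∧
    (∀ m n, m ≠ n → ∀ v ∈ internals (p m), v ∉ p n) ∧
    G = outRay f ∪ iUnion (fun n => ofList (p n))) ∨
  (∃ (f : ℕ → V) (α : ℕ → ℕ) (p : ℕ → List V),
    Function.Injective f ∧ StrictMono α ∧ (∀ n, 1 ≤ α n) ∧
    (∀ n, (p n).Nodup ∧ (p n).head? = some (f 0) ∧ (p n).getLast? = some (f (α n)) ∧
      2 ≤ (p n).length) ∧
    (∀ n, ∀ v ∈ internals (p n), v ∉ Set.range f) ∧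
    (∀ m n, m ≠ n → ∀ v ∈ internals (p m), v ∉ p n) ∧
    G = inRay f ∪ iUnion (fun n => ofList (p n)))

section Laced

variable [DecidableEq V]

/-- The segment of the path `l` from `x` to `y` (inclusive). -/
def seg (l : List V) (x y : V) : List V :=
  (l.drop (l.idxOf x)).take (l.idxOf y + 1 - l.idxOf x)

/-- `x ≤ y` along the path `l`. -/
def leIn (l : List V) (x y : V) : Prop :=
  x ∈ l ∧ y ∈ l ∧ l.idxOf x ≤ l.idxOf y

/-- `x < y` along the path `l`. -/
def ltIn (l : List V) (x y : V) : Prop :=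
  x ∈ l ∧ y ∈ l ∧ l.idxOf x < l.idxOf y

/-- The directed paths `P` and `Q` are laced. -/
def Laced (P Q : List V) : Prop :=
  (∀ v ∈ P, v ∉ Q) ∨
  ∃ (ℓ : ℕ) (x y : ℕ → V), 1 ≤ ℓ ∧
    (∀ i, 1 ≤ i → i ≤ ℓ → leIn P (x i) (y i) ∧ leIn Q (x i) (y i)) ∧
    (∀ i, 1 ≤ i → i < ℓ → ltIn P (y i) (x (i + 1)) ∧ ltIn Q (y (i + 1)) (x i)) ∧
    (∀ i, 1 ≤ i → i ≤ ℓ → seg P (x i) (y i) = seg Q (x i) (y i)) ∧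
    (∀ i, 1 ≤ i → i < ℓ → ∀ v ∈ internals (seg Q (y (i + 1)) (x i)), v ∉ P) ∧
    (∀ v ∈ Q.take (Q.idxOf (x ℓ) + 1), v ∈ P → v = x ℓ) ∧
    (∀ v ∈ Q.drop (Q.idxOf (y 1)), v ∈ P → v = y 1)

end Laced

/-- The out-ray `f` and the in-ray `g` with common root are knit:
`x i = f (p i) = g (p' i)` and `y i = f (q i) = g (q' i)` are the shared
segments, in the orders required in the paper. -/
def Knit (f g : ℕ → V) : Prop :=
  f 0 = g 0 ∧
  ∃ p q p' q' : ℕ → ℕ,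
    (∀ i, 0 < p i ∧ p i ≤ q i ∧ q i < p (i + 1)) ∧
    (∀ i, 0 < q' i ∧ q' i ≤ p' i ∧ p' i < q' (i + 1)) ∧
    (∀ i, q i - p i = p' i - q' i) ∧
    (∀ i, ∀ k ≤ q i - p i, f (p i + k) = g (p' i - k)) ∧
    (∀ i, ∀ m, p' i < m → m < q' (i + 1) → g m ∉ Set.range f) ∧
    (∀ m, 0 < m → m < q' 0 → g m ∉ Set.range f)

section Contract

variable [DecidableEq V]

/-- The map identifying `v` with `u`. -/
def contractFun (u v : V) : V → V := fun x => if x = v then u else x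

/-- Contracting the edge `(u, v)` of `G` onto the vertex `u`. -/
def contractEdge (G : DGraph V) (u v : V) : DGraph V :=
  ⟨contractFun u v '' G.verts,
   {e | e ≠ (u, u) ∧ ∃ e' ∈ G.edges, e = (contractFun u v e'.1, contractFun u v e'.2)}⟩

end Contract

/-- The edge `(u, v)` of `G` is butterfly contractible. -/
def IsButterflyContractibleEdge (G : DGraph V) (u v : V) : Prop :=
  (u, v) ∈ G.edges ∧
  ((∀ w, (u, w) ∈ G.edges → w = v) ∨ (∀ w, (w, v) ∈ G.edges → w = u))

/-- `G` and `H` are isomorphic directed graphs. -/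
def Isom (G H : DGraph V) : Prop :=
  ∃ φ : V → V, Set.BijOn φ G.verts H.verts ∧
    ∀ u ∈ G.verts, ∀ v ∈ G.verts, ((u, v) ∈ G.edges ↔ (φ u, φ v) ∈ H.edges)

end DGraph

/-!
Let `x` be the first vertex of `Q` on `P`, and `y` the last vertex of `Q` not lying before `x`
on `P`. Replace `xQy` by `xPy` and reroute the rest `yQ` recursively. All vertices of `yQ` on
`P` lie before `x`, and rerouting keeps every vertex on `P` below some vertex of `P` on the
original path; so all blocks of the rerouted rest lie before `x` on `P`, and `xPy` becomes the
last block `x_ℓ P y_ℓ`.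
-/

namespace DGraph

section Subgraphs

variable {V : Type u}

theorem forall_mem_zip_tail_iff_isChain {E : Set (V × V)} :
    ∀ {l : List V}, (∀ e ∈ l.zip l.tail, e ∈ E) ↔ l.IsChain (fun u v => (u, v) ∈ E)
  | [] => by simp
  | [_] => by simp
  | a :: b :: l => by
    rw [List.isChain_cons_cons, ← forall_mem_zip_tail_iff_isChain]
    simp

theorem ofList_subset_iff {G : DGraph V} {l : List V} :
    ofList l ⊆ G ↔ (∀ v ∈ l, v ∈ G.verts) ∧ l.IsChain (fun u v => (u, v) ∈ G.edges) := by
  rw [← forall_mem_zip_tail_iff_isChain]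
  rfl

theorem isPath_iff {G : DGraph V} {l : List V} :
    IsPath G l ↔ l ≠ [] ∧ l.Nodup ∧ ofList l ⊆ G := by
  rw [ofList_subset_iff, ← forall_mem_zip_tail_iff_isChain]
  rfl

theorem subset_refl (G : DGraph V) : G ⊆ G := ⟨subset_rfl, subset_rfl⟩

theorem subset_trans {G H K : DGraph V} (h₁ : G ⊆ H) (h₂ : H ⊆ K) : G ⊆ K :=
  ⟨h₁.1.trans h₂.1, h₁.2.trans h₂.2⟩

theorem subset_union_left (G H : DGraph V) : G ⊆ G ∪ H :=
  ⟨Set.subset_union_left, Set.subset_union_left⟩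

theorem subset_union_right (G H : DGraph V) : H ⊆ G ∪ H :=
  ⟨Set.subset_union_right, Set.subset_union_right⟩

theorem union_subset {G H K : DGraph V} (hG : G ⊆ K) (hH : H ⊆ K) : G ∪ H ⊆ K :=
  ⟨Set.union_subset hG.1 hH.1, Set.union_subset hG.2 hH.2⟩

theorem union_subset_union_right (G : DGraph V) {H K : DGraph V} (h : H ⊆ K) :
    G ∪ H ⊆ G ∪ K :=
  union_subset (subset_union_left G K) (subset_trans h (subset_union_right G K))

theorem isChain_ofList (l : List V) : l.IsChain (fun u v => (u, v) ∈ (ofList l).edges) :=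
  (ofList_subset_iff.1 (subset_refl _)).2

theorem ofList_subset_ofList {l₁ l₂ : List V} (h : l₁ <:+: l₂) : ofList l₁ ⊆ ofList l₂ :=
  ofList_subset_iff.2 ⟨fun _ hv => h.subset hv, (isChain_ofList l₂).infix h⟩

theorem mk_mem_edges_ofList_append {l₁ l₂ : List V} {u v : V} (hu : u ∈ l₁.getLast?)
    (hv : v ∈ l₂.head?) : (u, v) ∈ (ofList (l₁ ++ l₂)).edges :=
  (List.isChain_append.1 (isChain_ofList (l₁ ++ l₂))).2.2 u hu v hv

theorem ofList_append_subset {G : DGraph V} {l₁ l₂ : List V} (h₁ : ofList l₁ ⊆ G)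
    (h₂ : ofList l₂ ⊆ G) (h : ∀ u ∈ l₁.getLast?, ∀ v ∈ l₂.head?, (u, v) ∈ G.edges) :
    ofList (l₁ ++ l₂) ⊆ G := by
  rw [ofList_subset_iff] at *
  exact ⟨fun v hv => (List.mem_append.1 hv).elim (h₁.1 v) (h₂.1 v), h₁.2.append h₂.2 h⟩

theorem exists_eq_append_cons_of_exists_mem {p : V → Prop} [DecidablePred p] {l : List V}
    (h : ∃ v ∈ l, p v) : ∃ A x R, l = A ++ x :: R ∧ p x ∧ ∀ v ∈ A, ¬ p v := by
  obtain ⟨x, hx⟩ := Option.isSome_iff_exists.1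
    (List.find?_isSome (p := fun v => decide (p v)) (xs := l) |>.2 (by simpa using h))
  obtain ⟨hpx, A, R, rfl, hA⟩ := List.find?_eq_some_iff_append.1 hx
  exact ⟨A, x, R, rfl, by simpa using hpx, fun v hv => by simpa using hA v hv⟩

end Subgraphs

section Segments

variable {V : Type u} [DecidableEq V]

theorem seg_eq_cons {l : List V} {x y : V} (hxy : leIn l x y) :
    seg l x y = x :: (l.drop (l.idxOf x + 1)).take (l.idxOf y - l.idxOf x) := by
  obtain ⟨hx, -, hle⟩ := hxy
  rw [seg, List.drop_eq_getElem_cons (List.idxOf_lt_length_iff.2 hx), List.getElem_idxOf,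
    show l.idxOf y + 1 - l.idxOf x = l.idxOf y - l.idxOf x + 1 by omega, List.take_succ_cons]

theorem head?_seg {l : List V} {x y : V} (hxy : leIn l x y) : (seg l x y).head? = some x := by
  rw [seg_eq_cons hxy, List.head?_cons]

theorem getLast?_seg {l : List V} {x y : V} (hxy : leIn l x y) :
    (seg l x y).getLast? = some y := by
  obtain ⟨-, hy, hle⟩ := hxy
  have hy' := List.idxOf_lt_length_iff.2 hy
  rw [seg, List.getLast?_take, if_neg (by omega), List.getElem?_drop,
    show l.idxOf x + (l.idxOf y + 1 - l.idxOf x - 1) = l.idxOf y by omega,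
    List.getElem?_eq_getElem hy', List.getElem_idxOf]
  simp

theorem seg_infix (l : List V) (x y : V) : seg l x y <:+: l :=
  (List.take_prefix _ _).isInfix.trans (List.drop_suffix _ _).isInfix

theorem idxOf_le_idxOf_of_mem_seg {l : List V} {x y v : V} (hl : l.Nodup)
    (hv : v ∈ seg l x y) : l.idxOf x ≤ l.idxOf v ∧ l.idxOf v ≤ l.idxOf y := by
  obtain ⟨k, hk, rfl⟩ := List.mem_iff_getElem.1 hv
  simp only [seg, List.length_take, List.length_drop, List.getElem_take,
    List.getElem_drop] at hk ⊢
  rw [hl.idxOf_getElem]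
  omega

theorem seg_append_of_notMem {L l : List V} {x y : V} (hx : x ∉ L) (hy : y ∉ L) :
    seg (L ++ l) x y = seg l x y := by
  rw [seg, seg, List.idxOf_append_of_notMem hx, List.idxOf_append_of_notMem hy,
    List.drop_append, List.drop_eq_nil_of_le (by omega), List.nil_append,
    Nat.add_sub_cancel_left]
  congr 1
  omega

theorem seg_append_of_head?_of_getLast? {l m : List V} {x y : V} (hl : l.Nodup)
    (hx : l.head? = some x) (hy : l.getLast? = some y) : seg (l ++ m) x y = l := by
  obtain ⟨l₀, rfl⟩ := List.getLast?_eq_some_iff.1 hy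
  have hy₀ : y ∉ l₀ := fun h => List.disjoint_of_nodup_append hl h (List.mem_singleton_self y)
  obtain ⟨t, ht⟩ : ∃ t, l₀ ++ [y] = x :: t := ⟨_, (List.eq_cons_of_mem_head? hx)⟩
  have hidx : (l₀ ++ [y] ++ m).idxOf x = 0 := by rw [ht, List.cons_append, List.idxOf_cons_self]
  rw [seg, hidx, List.append_assoc, List.idxOf_append_of_notMem hy₀, List.singleton_append,
    List.idxOf_cons_self, List.drop_zero, Nat.add_zero, Nat.sub_zero,
    show l₀ ++ y :: m = l₀ ++ [y] ++ m by simp]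
  exact List.take_left' (by simp)

theorem internals_seg_cons {m : List V} {y w : V} (hw : w ∈ m) (hwy : w ≠ y) :
    internals (seg (y :: m) y w) = m.take (m.idxOf w) := by
  simp only [seg, internals, List.idxOf_cons_self, List.idxOf_cons_ne _ (Ne.symm hwy),
    Nat.sub_zero, List.drop_zero, List.take_succ_cons, List.tail_cons]
  have := List.idxOf_lt_length_iff.2 hw
  rw [List.dropLast_eq_take, List.take_take, List.length_take]
  congr 1
  omega

theorem leIn_append_of_notMem {L l : List V} {u w : V} (hu : u ∉ L) (hw : w ∉ L) :
    leIn (L ++ l) u w ↔ leIn l u w := by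
  simp [leIn, List.idxOf_append_of_notMem, hu, hw]

theorem ltIn_append_of_notMem {L l : List V} {u w : V} (hu : u ∉ L) (hw : w ∉ L) :
    ltIn (L ++ l) u w ↔ ltIn l u w := by
  simp [ltIn, List.idxOf_append_of_notMem, hu, hw]

theorem ltIn_append_of_mem_of_notMem {L l : List V} {u w : V} (hu : u ∈ L) (hw : w ∈ l)
    (hwL : w ∉ L) : ltIn (L ++ l) u w := by
  refine ⟨List.mem_append_left _ hu, List.mem_append_right _ hw, ?_⟩
  rw [List.idxOf_append_of_mem hu, List.idxOf_append_of_notMem hwL]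
  have := List.idxOf_lt_length_iff.2 hu
  omega

theorem drop_idxOf_append_of_notMem {L l : List V} {u : V} (hu : u ∉ L) :
    (L ++ l).drop ((L ++ l).idxOf u) = l.drop (l.idxOf u) := by
  rw [List.idxOf_append_of_notMem hu, List.drop_append, List.drop_eq_nil_of_le (by omega)]
  simp

theorem take_idxOf_append_of_notMem {L l : List V} {u : V} (hu : u ∉ L) :
    (L ++ l).take ((L ++ l).idxOf u + 1) = L ++ l.take (l.idxOf u + 1) := by
  rw [List.idxOf_append_of_notMem hu, Nat.add_assoc, List.take_length_add_append]

theorem notMem_take_idxOf (l : List V) (a : V) : a ∉ l.take (l.idxOf a) := by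
  intro h
  have h₁ := List.idxOf_append_of_mem (l₂ := l.drop (l.idxOf a)) h
  rw [List.take_append_drop] at h₁
  have h₂ := List.idxOf_lt_length_iff.2 h
  rw [← h₁, List.length_take] at h₂
  omega

end Segments

section Lacing

variable {V : Type u} [DecidableEq V]

/-- The conditions of `Laced` on the blocks `x i P y i`, except the one on the initial segment
of `Q`; unlike that one, they survive prepending vertices to `Q`. -/
def LacedBlocks (P Q : List V) (ℓ : ℕ) (x y : ℕ → V) : Prop :=
  (∀ i, 1 ≤ i → i ≤ ℓ → leIn P (x i) (y i) ∧ leIn Q (x i) (y i)) ∧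
  (∀ i, 1 ≤ i → i < ℓ → ltIn P (y i) (x (i + 1)) ∧ ltIn Q (y (i + 1)) (x i)) ∧
  (∀ i, 1 ≤ i → i ≤ ℓ → seg P (x i) (y i) = seg Q (x i) (y i)) ∧
  (∀ i, 1 ≤ i → i < ℓ → ∀ v ∈ internals (seg Q (y (i + 1)) (x i)), v ∉ P) ∧
  (∀ v ∈ Q.drop (Q.idxOf (y 1)), v ∈ P → v = y 1)

theorem laced_iff {P Q : List V} :
    Laced P Q ↔ (∀ v ∈ P, v ∉ Q) ∨ ∃ (ℓ : ℕ) (x y : ℕ → V), 1 ≤ ℓ ∧ LacedBlocks P Q ℓ x y ∧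
      ∀ v ∈ Q.take (Q.idxOf (x ℓ) + 1), v ∈ P → v = x ℓ := by
  simp only [Laced, LacedBlocks]
  refine or_congr_right (exists_congr fun ℓ => exists_congr fun x => exists_congr fun y => ?_)
  tauto

theorem lacedBlocks_one {P Q : List V} {x y : V} (hle : leIn P x y ∧ leIn Q x y)
    (hseg : seg P x y = seg Q x y) (hend : ∀ v ∈ Q.drop (Q.idxOf y), v ∈ P → v = y) :
    LacedBlocks P Q 1 (fun _ => x) (fun _ => y) :=
  ⟨fun _ _ _ => hle, fun _ _ _ => by omega, fun _ _ _ => hseg, fun _ _ _ => by omega, hend⟩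

namespace LacedBlocks

variable {P Q : List V} {ℓ : ℕ} {x y : ℕ → V}

theorem endpoints_mem (h : LacedBlocks P Q ℓ x y) {i : ℕ} (h₁ : 1 ≤ i) (h₂ : i ≤ ℓ) :
    x i ∈ Q ∧ y i ∈ Q :=
  ⟨(h.1 i h₁ h₂).2.1, (h.1 i h₁ h₂).2.2.1⟩

theorem append_left {L : List V} (h : LacedBlocks P Q ℓ x y) (hℓ : 1 ≤ ℓ)
    (hnd : (L ++ Q).Nodup) : LacedBlocks P (L ++ Q) ℓ x y := by
  have hQL : ∀ v ∈ Q, v ∉ L := fun v hv hvL => List.disjoint_of_nodup_append hnd hvL hv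
  have hx : ∀ i, 1 ≤ i → i ≤ ℓ → x i ∉ L := fun i h₁ h₂ => hQL _ (h.endpoints_mem h₁ h₂).1
  have hy : ∀ i, 1 ≤ i → i ≤ ℓ → y i ∉ L := fun i h₁ h₂ => hQL _ (h.endpoints_mem h₁ h₂).2
  obtain ⟨hle, hlt, hseg, hgap, hend⟩ := h
  refine ⟨fun i h₁ h₂ => ?_, fun i h₁ h₂ => ?_, fun i h₁ h₂ => ?_, fun i h₁ h₂ => ?_, ?_⟩
  · rw [leIn_append_of_notMem (hx i h₁ h₂) (hy i h₁ h₂)]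
    exact hle i h₁ h₂
  · rw [ltIn_append_of_notMem (hy (i + 1) (by omega) h₂) (hx i h₁ h₂.le)]
    exact hlt i h₁ h₂
  · rw [seg_append_of_notMem (hx i h₁ h₂) (hy i h₁ h₂)]
    exact hseg i h₁ h₂
  · rw [seg_append_of_notMem (hy (i + 1) (by omega) h₂) (hx i h₁ h₂.le)]
    exact hgap i h₁ h₂
  · rw [drop_idxOf_append_of_notMem (hy 1 le_rfl hℓ)]
    exact hend

theorem snoc (h : LacedBlocks P Q ℓ x y) (hℓ : 1 ≤ ℓ) {x' y' : V}
    (hle : leIn P x' y' ∧ leIn Q x' y') (hseg : seg P x' y' = seg Q x' y')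
    (hlt : ltIn P (y ℓ) x' ∧ ltIn Q y' (x ℓ))
    (hgap : ∀ v ∈ internals (seg Q y' (x ℓ)), v ∉ P) :
    LacedBlocks P Q (ℓ + 1) (fun i => if i ≤ ℓ then x i else x')
      (fun i => if i ≤ ℓ then y i else y') := by
  obtain ⟨hle', hlt', hseg', hgap', hend'⟩ := h
  refine ⟨fun i h₁ h₂ => ?_, fun i h₁ h₂ => ?_, fun i h₁ h₂ => ?_, fun i h₁ h₂ => ?_, ?_⟩
  · by_cases hi : i ≤ ℓ
    · simpa only [if_pos hi] using hle' i h₁ hi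
    · simpa only [if_neg hi] using hle
  · by_cases hi : i + 1 ≤ ℓ
    · simpa only [if_pos hi, if_pos (by omega : i ≤ ℓ)] using hlt' i h₁ hi
    · obtain rfl : i = ℓ := by omega
      simpa only [if_pos le_rfl, if_neg hi] using hlt
  · by_cases hi : i ≤ ℓ
    · simpa only [if_pos hi] using hseg' i h₁ hi
    · simpa only [if_neg hi] using hseg
  · by_cases hi : i + 1 ≤ ℓ
    · simpa only [if_pos hi, if_pos (by omega : i ≤ ℓ)] using hgap' i h₁ hi
    · obtain rfl : i = ℓ := by omega
      simpa only [if_pos le_rfl, if_neg hi] using hgap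
  · simpa only [if_pos hℓ] using hend'

end LacedBlocks

theorem Laced.append_left {P L C : List V} (h : Laced P C) (hL : ∀ v ∈ L, v ∉ P)
    (hnd : (L ++ C).Nodup) : Laced P (L ++ C) := by
  rw [laced_iff] at h ⊢
  rcases h with hdisj | ⟨ℓ, x, y, hℓ, hb, hstart⟩
  · refine Or.inl fun v hvP hv => ?_
    rcases List.mem_append.1 hv with hv | hv
    exacts [hL v hv hvP, hdisj v hvP hv]
  · have hxL : x ℓ ∉ L := fun hxL =>
      List.disjoint_of_nodup_append hnd hxL (hb.endpoints_mem hℓ le_rfl).1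
    refine Or.inr ⟨ℓ, x, y, hℓ, hb.append_left hℓ hnd, fun v hv hvP => ?_⟩
    rw [take_idxOf_append_of_notMem hxL] at hv
    rcases List.mem_append.1 hv with hv | hv
    exacts [absurd hvP (hL v hv), hstart v hv hvP]

theorem Laced.seg_append {P C : List V} {x y : V} (h : Laced P C) (hxy : leIn P x y)
    (hnd : (seg P x y ++ C).Nodup) (hC : ∀ v ∈ C, v ∈ P → P.idxOf v < P.idxOf x) :
    Laced P (seg P x y ++ C) := by
  set S := seg P x y
  obtain ⟨t, hSx⟩ : ∃ t, S = x :: t := ⟨_, seg_eq_cons hxy⟩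
  obtain ⟨S₀, hSy⟩ : ∃ S₀, S = S₀ ++ [y] := List.getLast?_eq_some_iff.1 (getLast?_seg hxy)
  have hCS : ∀ v ∈ C, v ∉ S := fun v hv hvS => List.disjoint_of_nodup_append hnd hvS hv
  have hyS : y ∈ S := by simp [hSy]
  have hyS₀ : y ∉ S₀ := fun h =>
    List.disjoint_of_nodup_append (hSy ▸ List.nodup_append.1 hnd).1 h (List.mem_singleton_self y)
  have hQ : S ++ C = S₀ ++ y :: C := by simp [hSy]
  have hle : leIn P x y ∧ leIn (S ++ C) x y :=
    ⟨hxy, List.mem_append_left _ (by simp [hSx]), List.mem_append_left _ hyS, by simp [hSx]⟩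
  have hseg : seg P x y = seg (S ++ C) x y :=
    (seg_append_of_head?_of_getLast? (List.nodup_append.1 hnd).1 (head?_seg hxy)
      (getLast?_seg hxy)).symm
  have hstart : ∀ v ∈ (S ++ C).take ((S ++ C).idxOf x + 1), v ∈ P → v = x := by
    simp [hSx]
  rw [laced_iff] at h ⊢
  rcases h with hdisj | ⟨ℓ, x', y', hℓ, hb, hstart'⟩
  · have hend : ∀ v ∈ (S ++ C).drop ((S ++ C).idxOf y), v ∈ P → v = y := by
      rw [hQ, drop_idxOf_append_of_notMem hyS₀, List.idxOf_cons_self, List.drop_zero]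
      rintro v (_ | ⟨_, hv⟩) hvP
      exacts [rfl, absurd hv (hdisj v hvP)]
    exact Or.inr ⟨1, fun _ => x, fun _ => y, le_rfl, lacedBlocks_one hle hseg hend, hstart⟩
  · obtain ⟨hxC, hyC⟩ := hb.endpoints_mem hℓ le_rfl
    have hlt : ltIn P (y' ℓ) x ∧ ltIn (S ++ C) y (x' ℓ) := by
      have hyP := (hb.1 ℓ hℓ le_rfl).1.2.1
      exact ⟨⟨hyP, hxy.1, hC _ hyC hyP⟩, ltIn_append_of_mem_of_notMem hyS hxC (hCS _ hxC)⟩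
    have hgap : ∀ v ∈ internals (seg (S ++ C) y (x' ℓ)), v ∉ P := by
      have hxy' : x' ℓ ≠ y := fun h => hCS _ hxC (h ▸ hyS)
      rw [hQ, seg_append_of_notMem hyS₀ fun h => hCS _ hxC (hSy ▸ List.mem_append_left _ h),
        internals_seg_cons hxC hxy']
      intro v hv hvP
      have := hstart' v (List.take_subset_take_left _ (Nat.le_succ _) hv) hvP
      exact notMem_take_idxOf C _ (this ▸ hv)
    refine Or.inr ⟨ℓ + 1, _, _, by omega,
      (hb.append_left hℓ hnd).snoc hℓ hle hseg hlt hgap, ?_⟩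
    simpa only [Nat.not_succ_le_self, if_false] using hstart

end Lacing

section Rerouting

variable {V : Type u} [DecidableEq V]

theorem exists_split_of_exists_mem {P W : List V} (hW : ∃ v ∈ W, v ∈ P) :
    ∃ (A N T : List V) (x y : V), W = A ++ N ++ T ∧ N.head? = some x ∧ N.getLast? = some y ∧
      (∀ v ∈ A, v ∉ P) ∧ leIn P x y ∧ ∀ v ∈ T, v ∈ P → P.idxOf v < P.idxOf x := by
  obtain ⟨A, x, R, rfl, hxP, hA⟩ := exists_eq_append_cons_of_exists_mem hW
  obtain ⟨T', y, M', hrev, ⟨hyP, hxy⟩, hT⟩ :=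
    exists_eq_append_cons_of_exists_mem (p := fun v => v ∈ P ∧ P.idxOf x ≤ P.idxOf v)
      (l := (A ++ x :: R).reverse) ⟨x, by simp, hxP, le_rfl⟩
  have hW : A ++ x :: R = M'.reverse ++ y :: T'.reverse := by
    rw [← List.reverse_reverse (A ++ x :: R), hrev]
    simp
  obtain ⟨M, hM⟩ : ∃ M, x :: R = M ++ y :: T'.reverse := by
    rcases List.append_eq_append_iff.1 hW with ⟨M, -, hM⟩ | ⟨_ | ⟨c, cs⟩, h₁, h₂⟩
    · exact ⟨M, hM⟩
    · exact ⟨[], by simpa using h₂.symm⟩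
    · obtain rfl : y = c := (List.cons_eq_cons.1 h₂).1
      exact absurd hyP (hA y (by simp [h₁]))
  refine ⟨A, M ++ [y], T'.reverse, x, y, by simp [hM], ?_, by simp, hA, ⟨hxP, hyP, hxy⟩, ?_⟩
  · have := congrArg List.head? hM
    cases M <;> simp_all
  · intro v hv hvP
    have := hT v (List.mem_reverse.1 hv)
    simp only [hvP, true_and, not_le] at this
    exact this

theorem ofList_append_seg_append_subset {P A N T C : List V} {x y : V} (hxy : leIn P x y)
    (hx : N.head? = some x) (hy : N.getLast? = some y) (hC : ofList C ⊆ ofList P ∪ ofList T)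
    (hCT : C.head? = T.head?) :
    ofList (A ++ (seg P x y ++ C)) ⊆ ofList P ∪ ofList (A ++ N ++ T) := by
  have hA : ofList A ⊆ ofList (A ++ N ++ T) := ofList_subset_ofList
    (List.prefix_append _ _ |>.trans (List.prefix_append _ _)).isInfix
  have hT : ofList T ⊆ ofList (A ++ N ++ T) := ofList_subset_ofList (List.suffix_append _ _).isInfix
  refine ofList_append_subset (subset_trans hA (subset_union_right _ _))
    (ofList_append_subset (subset_trans (ofList_subset_ofList (seg_infix P x y))
      (subset_union_left _ _)) (subset_trans hC (union_subset_union_right _ hT)) ?_) ?_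
  · intro u hu v hv
    rw [getLast?_seg hxy, Option.mem_some_iff] at hu
    subst hu
    refine Or.inr (mk_mem_edges_ofList_append ?_ (hCT ▸ hv))
    simp [hy]
  · intro u hu v hv
    rw [List.head?_append, head?_seg hxy, Option.mem_def, Option.some_or, Option.some_inj] at hv
    subst hv
    refine Or.inr (List.append_assoc A N T ▸ mk_mem_edges_ofList_append hu ?_)
    simp [hx]

theorem nodup_append_seg_append {P A T C : List V} {x y : V} (hP : P.Nodup)
    (hAT : (A ++ T).Nodup) (hA : ∀ v ∈ A, v ∉ P) (hC : C.Nodup) (hCT : ∀ v ∈ C, v ∈ P ∨ v ∈ T)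
    (hCx : ∀ v ∈ C, v ∈ P → P.idxOf v < P.idxOf x) : (A ++ (seg P x y ++ C)).Nodup := by
  have hS : ∀ v ∈ seg P x y, v ∈ P ∧ P.idxOf x ≤ P.idxOf v := fun v hv =>
    ⟨(seg_infix P x y).subset hv, (idxOf_le_idxOf_of_mem_seg hP hv).1⟩
  refine List.nodup_append.2 ⟨hAT.of_append_left, List.nodup_append.2
    ⟨(seg_infix P x y).sublist.nodup hP, hC, ?_⟩, ?_⟩
  · rintro v hvS _ hvC rfl
    have := hCx v hvC (hS v hvS).1
    have := (hS v hvS).2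
    omega
  · rintro v hvA _ hv rfl
    rcases List.mem_append.1 hv with hvS | hvC
    · exact hA v hvA (hS v hvS).1
    · exact List.disjoint_of_nodup_append hAT hvA ((hCT v hvC).resolve_left (hA v hvA))

theorem exists_laced_rerouting {P : List V} (hP : P.Nodup) (W : List V) (hW : W.Nodup) :
    ∃ W' : List V, W'.Nodup ∧ W'.head? = W.head? ∧ W'.getLast? = W.getLast? ∧
      ofList W' ⊆ ofList P ∪ ofList W ∧
      (∀ v ∈ W', v ∈ P → ∃ w ∈ W, w ∈ P ∧ P.idxOf v ≤ P.idxOf w) ∧ Laced P W' := by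
  induction h : W.length using Nat.strong_induction_on generalizing W with
  | _ n ih =>
  by_cases hWP : ∃ v ∈ W, v ∈ P
  swap
  · push Not at hWP
    exact ⟨W, hW, rfl, rfl, subset_union_right _ _, fun v hv hvP => absurd hvP (hWP v hv),
      laced_iff.2 (Or.inl fun v hvP hv => hWP v hv hvP)⟩
  obtain ⟨A, N, T, x, y, rfl, hx, hy, hA, hxy, hT⟩ := exists_split_of_exists_mem hWP
  have hN : N ≠ [] := by rintro rfl; simp at hx
  obtain ⟨C, hC, hCh, hCl, hCsub, hCbound, hCP⟩ :=
    ih T.length (by have := List.length_pos_iff.2 hN; simp [← h]; omega) T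
      (List.Sublist.nodup (List.sublist_append_right _ _) hW) rfl
  have hCbelow : ∀ v ∈ C, v ∈ P → P.idxOf v < P.idxOf x := by
    intro v hv hvP
    obtain ⟨w, hwT, hwP, hvw⟩ := hCbound v hv hvP
    exact hvw.trans_lt (hT w hwT hwP)
  have hASC : (A ++ (seg P x y ++ C)).Nodup :=
    nodup_append_seg_append hP (hW.sublist (by simp)) hA hC (fun v hv => hCsub.1 hv) hCbelow
  refine ⟨A ++ (seg P x y ++ C), hASC, by simp [head?_seg hxy, hx],
    by simp [getLast?_seg hxy, hy, hCl], ofList_append_seg_append_subset hxy hx hy hCsub hCh,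
    fun v hv hvP => ?_, (hCP.seg_append hxy hASC.of_append_right hCbelow).append_left hA hASC⟩
  rcases List.mem_append.1 hv with hvA | hv
  · exact absurd hvP (hA v hvA)
  rcases List.mem_append.1 hv with hvS | hvC
  · exact ⟨y, by simp [List.mem_of_getLast? hy], hxy.2.1, (idxOf_le_idxOf_of_mem_seg hP hvS).2⟩
  · obtain ⟨w, hwT, hwP, hvw⟩ := hCbound v hvC hvP
    exact ⟨w, List.mem_append_right _ hwT, hwP, hvw⟩

end Rerouting

end DGraph

/-- Let `D` be a directed graph, let `P` be a directed path
in `D`, and let `Q` be a directed `a`–`b` path in `D`.  Then there exists a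
directed `a`–`b` path `Q'` in `D` with `Q' ⊆ P ∪ Q` such that `P` and `Q'`
are laced. -/
theorem exists_laced_path {V : Type u} [DecidableEq V] (D : DGraph V)
    (P : List V) (hP : DGraph.IsPath D P) (a b : V) (Q : List V)
    (hQ : DGraph.IsPathFrom D a b Q) :
    ∃ Q' : List V, DGraph.IsPathFrom D a b Q' ∧
      DGraph.ofList Q' ⊆ DGraph.ofList P ∪ DGraph.ofList Q ∧
      DGraph.Laced P Q' := by
  obtain ⟨hQ, ha, hb⟩ := hQ
  obtain ⟨-, hPnd, hPD⟩ := DGraph.isPath_iff.1 hP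
  obtain ⟨-, hQnd, hQD⟩ := DGraph.isPath_iff.1 hQ
  obtain ⟨Q', hnd, ha', hb', hsub, -, hlaced⟩ := DGraph.exists_laced_rerouting hPnd Q hQnd
  have hne : Q' ≠ [] := by
    rintro rfl
    simp [ha] at ha'
  have hQ'D : DGraph.ofList Q' ⊆ D := DGraph.subset_trans hsub (DGraph.union_subset hPD hQD)
  exact ⟨Q', ⟨DGraph.isPath_iff.2 ⟨hne, hnd, hQ'D⟩, ha'.trans ha, hb'.trans hb⟩, hsub, hlaced⟩
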